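/- arXiv:2401.04300 — 3 statements merged into one kernel-verified Lean document; each statement's English description precedes it below -/
import Mathlib

section
/- Let X ⊆ 2^ω and let D be a set of perfect trees that is dense in Sacks forcing, translation-invariant (p ∈ D iff p + t ∈ D for all t), and such that no subfamily of D of cardinality less than the continuum covers X with its bodies. Then there exists a Marczewski null set Y with X + Y = 2^ω; in particular X is not s₀-shiftable. -/
open Cardinal

abbrev Cantor : Type := ℕ → Bool

def cAdd (x y : Cantor) : Cantor := fun n => xor (x n) (y n)

def setAdd (X Y : Set Cantor) : Set Cantor := Set.image2 cAdd X Y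

def IsTree (p : Set (List Bool)) : Prop := ∀ σ ∈ p, ∀ τ : List Bool, τ <+: σ → τ ∈ p

def Splits (p : Set (List Bool)) (σ : List Bool) : Prop :=
  σ ++ [false] ∈ p ∧ σ ++ [true] ∈ p

def PerfTree (p : Set (List Bool)) : Prop :=
  p.Nonempty ∧ IsTree p ∧ ∀ σ ∈ p, ∃ τ ∈ p, σ <+: τ ∧ Splits p τ

def seg (x : Cantor) (n : ℕ) : List Bool := List.ofFn (fun i : Fin n => x i)

def body (p : Set (List Bool)) : Set Cantor := { x | ∀ n, seg x n ∈ p }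

def shiftNode (t : Cantor) (σ : List Bool) : List Bool :=
  σ.mapIdx fun i b => xor b (t i)

def treeAdd (p : Set (List Bool)) (t : Cantor) : Set (List Bool) := shiftNode t '' p

def SkewT (p : Set (List Bool)) : Prop :=
  ∀ σ ∈ p, ∀ τ ∈ p, Splits p σ → Splits p τ → σ.length = τ.length → σ = τ

def PerfectSet (P : Set Cantor) : Prop := Perfect P ∧ P.Nonempty

def MarczewskiNull (Y : Set Cantor) : Prop :=
  ∀ P : Set Cantor, PerfectSet P → ∃ Q, PerfectSet Q ∧ Q ⊆ P ∧ Q ∩ Y = ∅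

def MarczewskiNullT (Y : Set Cantor) : Prop :=
  ∀ p, PerfTree p → ∃ q, PerfTree q ∧ q ⊆ p ∧ body q ∩ Y = ∅

def Shiftable (X : Set Cantor) : Prop :=
  ∀ Y, MarczewskiNull Y → setAdd X Y ≠ Set.univ

/-!
Enumerate `2^ω` as `(z α)_{α < 𝔠}` and all sets of nodes as `(e α)_{α < 𝔠}`. For each `β`, the
fewer than `𝔠` trees `e α + z β` with `α ≤ β` and `e α ∈ D` lie in `D` by invariance, so they do
not cover `X`: pick `x β ∈ X` outside all of them and put `y β = x β + z β`. Then
`x β + y β = z β`, so `X + Y = 2^ω` for `Y = {y β}`. Given a perfect set `P`, density yields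
`e α ∈ D` with `[e α] ⊆ P`; no `y β` with `β ≥ α` lies in `[e α]`, and the fewer than `𝔠`
remaining points are avoided by a perfect subset of `[e α]`, because a perfect set contains `𝔠`
pairwise disjoint uncountable closed sets.
-/

open Set Topology

@[simp] lemma seg_length (x : Cantor) (n : ℕ) : (seg x n).length = n := List.length_ofFn

@[simp] lemma getElem_seg (x : Cantor) (n i : ℕ) (h : i < (seg x n).length) :
    (seg x n)[i] = x i := by
  simp [seg]

lemma seg_eq_seg_iff {x y : Cantor} {n : ℕ} : seg x n = seg y n ↔ ∀ i < n, x i = y i := by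
  simp [seg, List.ofFn_inj, funext_iff, Fin.forall_iff]

lemma seg_succ (x : Cantor) (n : ℕ) : seg x (n + 1) = seg x n ++ [x n] :=
  List.ofFn_succ_last

lemma seg_prefix_seg (x : Cantor) {m n : ℕ} (h : m ≤ n) : seg x m <+: seg x n := by
  rw [List.prefix_iff_eq_take]
  exact List.ext_getElem (by simp [h]) fun i _ _ => by simp

lemma eq_seg_length_of_prefix {σ : List Bool} {x : Cantor} {n : ℕ} (h : σ <+: seg x n) :
    σ = seg x σ.length :=
  List.ext_getElem (by simp) fun i hi _ => by simp [h.getElem hi]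

lemma seg_getD_length (σ : List Bool) : seg (fun i => σ.getD i false) σ.length = σ :=
  List.ext_getElem (by simp) fun i _ hi => by simp [hi]

lemma isClopen_setOf_seg_mem (p : Set (List Bool)) (n : ℕ) : IsClopen {x : Cantor | seg x n ∈ p} :=
  (isClopen_discrete {f : Fin n → Bool | List.ofFn f ∈ p}).preimage
    (continuous_pi fun i => continuous_apply (i : ℕ))

lemma setOf_seg_eq_mem_nhds (x : Cantor) (n : ℕ) : {y | seg y n = seg x n} ∈ 𝓝 x :=
  (isClopen_setOf_seg_mem {seg x n} n).isOpen.mem_nhds rfl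

lemma exists_setOf_seg_eq_subset_of_mem_nhds {x : Cantor} {U : Set Cantor} (hU : U ∈ 𝓝 x) :
    ∃ n, {y | seg y n = seg x n} ⊆ U := by
  obtain ⟨_, ⟨z, n, rfl⟩, hx, hsub⟩ := (PiNat.isTopologicalBasis_cylinders _).mem_nhds_iff.mp hU
  refine ⟨n, fun y hy => hsub ?_⟩
  rw [← PiNat.mem_cylinder_iff_eq.mp hx]
  exact PiNat.mem_cylinder_iff.mpr (seg_eq_seg_iff.mp hy)

lemma isClosed_body (p : Set (List Bool)) : IsClosed (body p) := by
  simp only [body, ofPred_forall]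
  exact isClosed_iInter fun n => (isClopen_setOf_seg_mem p n).isClosed

lemma body_mono {p q : Set (List Bool)} (h : p ⊆ q) : body p ⊆ body q :=
  fun _ hx n => h (hx n)

lemma shiftNode_involutive (t : Cantor) : Function.Involutive (shiftNode t) := fun σ =>
  List.ext_getElem (by simp [shiftNode]) fun i _ _ => by simp [shiftNode]

lemma shiftNode_seg (t x : Cantor) (n : ℕ) : shiftNode t (seg x n) = seg (cAdd x t) n :=
  List.ext_getElem (by simp [shiftNode]) fun i _ _ => by simp [shiftNode, cAdd]

lemma mem_body_treeAdd {p : Set (List Bool)} {t x : Cantor} :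
    x ∈ body (treeAdd p t) ↔ cAdd x t ∈ body p := by
  simp only [body, treeAdd, (shiftNode_involutive t).image_eq_preimage_symm, mem_preimage,
    shiftNode_seg, mem_ofPred_eq]

lemma Splits.append_mem {p : Set (List Bool)} {σ : List Bool} (h : Splits p σ) (b : Bool) :
    σ ++ [b] ∈ p := by
  cases b
  exacts [h.1, h.2]

namespace PerfTree

variable {p : Set (List Bool)}

lemma nil_mem (hp : PerfTree p) : [] ∈ p :=
  let ⟨σ, hσ⟩ := hp.1
  hp.2.1 σ hσ [] List.nil_prefix

lemma exists_prefix_length_ge (hp : PerfTree p) {σ : List Bool} (hσ : σ ∈ p) (n : ℕ) :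
    ∃ τ ∈ p, σ <+: τ ∧ n ≤ τ.length := by
  induction n with
  | zero => exact ⟨σ, hσ, List.prefix_refl σ, Nat.zero_le _⟩
  | succ n ih =>
    obtain ⟨τ, hτ, hστ, hn⟩ := ih
    obtain ⟨ρ, -, hτρ, hρ⟩ := hp.2.2 τ hτ
    refine ⟨ρ ++ [false], hρ.append_mem false, hστ.trans (hτρ.trans (List.prefix_append _ _)), ?_⟩
    have := hτρ.length_le
    simp only [List.length_append, List.length_singleton]
    omega

-- König's lemma, via compactness of `2^ω`.
lemma exists_mem_body_seg_eq (hp : PerfTree p) {σ : List Bool} (hσ : σ ∈ p) :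
    ∃ x ∈ body p, seg x σ.length = σ := by
  let K : ℕ → Set Cantor := fun n => {x | seg x σ.length ∈ ({σ} : Set _)} ∩ {x | seg x n ∈ p}
  have hK : ∀ n, IsClosed (K n) := fun n =>
    (isClopen_setOf_seg_mem _ _).isClosed.inter (isClopen_setOf_seg_mem _ _).isClosed
  have hne : ∀ n, (K n).Nonempty := fun n => by
    obtain ⟨τ, hτ, hστ, hn⟩ := hp.exists_prefix_length_ge hσ n
    rw [← seg_getD_length τ] at hτ hστ
    exact ⟨_, (eq_seg_length_of_prefix hστ).symm,
      hp.2.1 _ hτ _ (seg_prefix_seg _ hn)⟩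
  obtain ⟨x, hx⟩ := IsCompact.nonempty_iInter_of_sequence_nonempty_isCompact_isClosed K
    (fun n x hx => ⟨hx.1, hp.2.1 _ hx.2 _ (seg_prefix_seg x n.le_succ)⟩) hne
    (hK 0).isCompact hK
  rw [mem_iInter] at hx
  exact ⟨x, fun n => (hx n).2, (hx 0).1⟩

lemma perfectSet_body (hp : PerfTree p) : PerfectSet (body p) := by
  refine ⟨⟨isClosed_body p, fun x hx => accPt_iff_nhds.mpr fun U hU => ?_⟩, ?_⟩
  · obtain ⟨n, hn⟩ := exists_setOf_seg_eq_subset_of_mem_nhds hU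
    obtain ⟨τ, hτ, hxτ, hsplit⟩ := hp.2.2 (seg x n) (hx n)
    obtain ⟨y, hy, hyτ⟩ := hp.exists_mem_body_seg_eq (hsplit.append_mem (!x τ.length))
    rw [List.length_append, List.length_singleton, seg_succ] at hyτ
    obtain ⟨hyτ, hyx⟩ : seg y τ.length = τ ∧ y τ.length = !x τ.length := by simpa using hyτ
    refine ⟨y, ⟨hn ?_, hy⟩, fun h => by simp [h] at hyx⟩
    have h := eq_seg_length_of_prefix (hyτ.symm ▸ hxτ)
    rw [seg_length] at h
    exact h.symm
  · obtain ⟨x, hx, -⟩ := hp.exists_mem_body_seg_eq hp.nil_mem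
    exact ⟨x, hx⟩

end PerfTree

def treeOf (P : Set Cantor) : Set (List Bool) := {σ | ∃ x ∈ P, seg x σ.length = σ}

lemma body_treeOf_subset {P : Set Cantor} (hP : IsClosed P) : body (treeOf P) ⊆ P := by
  intro x hx
  rw [← hP.closure_eq, mem_closure_iff_nhds]
  intro U hU
  obtain ⟨n, hn⟩ := exists_setOf_seg_eq_subset_of_mem_nhds hU
  obtain ⟨y, hy, hyx⟩ := hx n
  rw [seg_length] at hyx
  exact ⟨y, hn hyx, hy⟩

namespace PerfectSet

variable {P : Set Cantor}

lemma perfTree_treeOf (hP : PerfectSet P) : PerfTree (treeOf P) := by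
  obtain ⟨⟨-, hacc⟩, x₀, hx₀⟩ := hP
  refine ⟨⟨[], x₀, hx₀, rfl⟩, fun σ ⟨x, hx, hσ⟩ τ hτ => ⟨x, hx, ?_⟩, ?_⟩
  · exact (eq_seg_length_of_prefix (hσ ▸ hτ)).symm
  rintro σ ⟨x, hx, hσ⟩
  obtain ⟨y, ⟨hyx, hy⟩, hne⟩ :=
    accPt_iff_nhds.mp (hacc x hx) _ (setOf_seg_eq_mem_nhds x σ.length)
  have hdiff : ∃ m, y m ≠ x m := by
    by_contra! h
    exact hne (funext h)
  -- the tree splits where `y` first leaves `x`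
  set m := Nat.find hdiff
  have hagree : seg y m = seg x m :=
    seg_eq_seg_iff.mpr fun i hi => not_not.mp (Nat.find_min hdiff hi)
  have hσm : σ.length ≤ m := by
    by_contra! h
    exact Nat.find_spec hdiff (seg_eq_seg_iff.mp hyx m h)
  have hmem : ∀ b, seg x m ++ [b] ∈ treeOf P := by
    intro b
    obtain ⟨w, hw, hwb⟩ : ∃ w ∈ P, seg w (m + 1) = seg x m ++ [b] := by
      by_cases hb : b = x m
      · exact ⟨x, hx, by rw [seg_succ, hb]⟩
      · refine ⟨y, hy, ?_⟩
        have : b = y m := by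
          have := Nat.find_spec hdiff
          revert hb this; cases b <;> cases x m <;> cases y m <;> simp
        rw [seg_succ, hagree, this]
    exact ⟨w, hw, by simpa using hwb⟩
  exact ⟨seg x m, ⟨x, hx, by simp⟩, hσ ▸ seg_prefix_seg x hσm, hmem false, hmem true⟩

lemma exists_continuous_injective_prod (hP : PerfectSet P) :
    ∃ F : Cantor × Cantor → Cantor, range F ⊆ P ∧ Continuous F ∧ Function.Injective F := by
  let := TopologicalSpace.upgradeIsCompletelyMetrizable Cantor
  obtain ⟨f, hfP, hf, hinj⟩ := hP.1.exists_nat_bool_injection hP.2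
  let e : Cantor × Cantor ≃ₜ Cantor := Homeomorph.sumArrowHomeomorphProdArrow.symm.trans
    (Homeomorph.piCongrLeft (Y := fun _ => Bool) Equiv.natSumNatEquivNat)
  exact ⟨f ∘ e, (range_comp_subset_range _ _).trans hfP, hf.comp e.continuous,
    hinj.comp e.injective⟩

-- Split `P` into `𝔠` disjoint uncountable compact pieces; one of them misses `S`.
lemma exists_subset_disjoint_of_mk_lt (hP : PerfectSet P) {S : Set Cantor} (hS : #S < 𝔠) :
    ∃ Q, PerfectSet Q ∧ Q ⊆ P ∧ Q ∩ S = ∅ := by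
  obtain ⟨F, hFP, hF, hinj⟩ := hP.exists_continuous_injective_prod
  have hsmall : #(Prod.fst '' (F ⁻¹' S)) < #Cantor :=
    calc #(Prod.fst '' (F ⁻¹' S)) ≤ #(F ⁻¹' S) := mk_image_le
      _ ≤ #S := mk_preimage_of_injective F S hinj
      _ < #Cantor := by simpa using hS
  obtain ⟨u, hu⟩ : ∃ u, u ∉ Prod.fst '' (F ⁻¹' S) := by
    by_contra! h
    exact hsmall.ne (by rw [eq_univ_of_forall h, mk_univ])
  have hinj_u : Function.Injective fun x => F (u, x) := fun x x' h => (Prod.ext_iff.mp (hinj h)).2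
  have hK : IsClosed (range fun x => F (u, x)) :=
    (isCompact_range (hF.comp (Continuous.prodMk_right u))).isClosed
  have hKunc : ¬ (range fun x => F (u, x)).Countable := by
    rw [← le_aleph0_iff_set_countable, mk_range_eq _ hinj_u, not_le]
    simpa using aleph0_lt_continuum
  obtain ⟨Q, hQ, hQne, hQK⟩ := exists_perfect_nonempty_of_isClosed_of_not_countable hK hKunc
  refine ⟨Q, ⟨hQ, hQne⟩, hQK.trans ((range_comp_subset_range _ F).trans hFP), ?_⟩
  refine eq_empty_of_forall_notMem fun _ ⟨hQ', hS'⟩ => ?_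
  obtain ⟨x, rfl⟩ := hQK hQ'
  exact hu ⟨(u, x), hS', rfl⟩

end PerfectSet

lemma exists_linearOrder_mk_eq_continuum_mk_Iic_lt :
    ∃ (ι : Type) (_ : LinearOrder ι), #ι = 𝔠 ∧ ∀ i : ι, #(Iic i) < 𝔠 := by
  have h : (#((𝔠 : Cardinal.{0}).ord.ToType)).ord = Ordinal.type (α := (𝔠 : Cardinal.{0}).ord.ToType) (· < ·) := by
    rw [mk_ord_toType, Ordinal.type_toType]
  refine ⟨(𝔠 : Cardinal.{0}).ord.ToType, inferInstance, mk_ord_toType _, fun i => ?_⟩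
  simpa using mk_Iic_lt i h (by simpa using aleph0_le_continuum)

section Construction

variable {X : Set Cantor} {D : Set (Set (List Bool))}

lemma exists_mem_cAdd_notMem_body (hperf : ∀ p ∈ D, PerfTree p)
    (hinv : ∀ p, PerfTree p → ∀ t : Cantor, p ∈ D ↔ treeAdd p t ∈ D)
    (hcov : ∀ D' ⊆ D, #D' < 𝔠 → ¬ X ⊆ ⋃ p ∈ D', body p)
    {F : Set (Set (List Bool))} (hFD : F ⊆ D) (hF : #F < 𝔠) (t : Cantor) :
    ∃ x ∈ X, ∀ p ∈ F, cAdd x t ∉ body p := by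
  have hsub : (fun p => treeAdd p t) '' F ⊆ D := by
    rintro _ ⟨p, hp, rfl⟩
    exact (hinv p (hperf p (hFD hp)) t).mp (hFD hp)
  obtain ⟨x, hxX, hx⟩ := not_subset.mp (hcov _ hsub (mk_image_le.trans_lt hF))
  exact ⟨x, hxX, fun p hp hxp => hx (mem_iUnion₂.mpr ⟨_, ⟨p, hp, rfl⟩, mem_body_treeAdd.mpr hxp⟩)⟩

lemma marczewskiNull_range {ι : Type} [LinearOrder ι] (hperf : ∀ p ∈ D, PerfTree p)
    (hdense : ∀ p, PerfTree p → ∃ q ∈ D, q ⊆ p) (e : ι ≃ Set (List Bool))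
    (hsmall : ∀ α : ι, #(Iic α) < 𝔠) (y : ι → Cantor)
    (hy : ∀ α β, α ≤ β → e α ∈ D → y β ∉ body (e α)) : MarczewskiNull (range y) := by
  intro P hP
  obtain ⟨q, hqD, hqP⟩ := hdense _ hP.perfTree_treeOf
  obtain ⟨Q, hQ, hQq, hQy⟩ := (hperf q hqD).perfectSet_body.exists_subset_disjoint_of_mk_lt
    (mk_image_le.trans_lt (hsmall (e.symm q)) : #(y '' Iic (e.symm q)) < 𝔠)
  refine ⟨Q, hQ, hQq.trans ((body_mono hqP).trans (body_treeOf_subset hP.1.1)), ?_⟩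
  refine eq_empty_of_forall_notMem fun _ ⟨hyQ, β, hβ⟩ => ?_
  subst hβ
  rcases le_or_gt β (e.symm q) with hβq | hqβ
  · exact hQy.subset ⟨hyQ, β, hβq, rfl⟩
  · exact hy _ β hqβ.le (by simpa using hqD) (by simpa using hQq hyQ)

end Construction

theorem stmt7 (X : Set Cantor) (D : Set (Set (List Bool)))
    (hperf : ∀ p ∈ D, PerfTree p)
    (hdense : ∀ p, PerfTree p → ∃ q ∈ D, q ⊆ p)
    (hinv : ∀ p, PerfTree p → ∀ t : Cantor, p ∈ D ↔ treeAdd p t ∈ D)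
    (hcov : ∀ D' ⊆ D, #D' < Cardinal.continuum → ¬ X ⊆ ⋃ p ∈ D', body p) :
    (∃ Y, MarczewskiNull Y ∧ setAdd X Y = Set.univ) ∧ ¬ Shiftable X := by
  obtain ⟨ι, _, hι, hsmall⟩ := exists_linearOrder_mk_eq_continuum_mk_Iic_lt
  obtain ⟨z⟩ : Nonempty (ι ≃ Cantor) := Cardinal.eq.mp (by simp [hι])
  obtain ⟨e⟩ : Nonempty (ι ≃ Set (List Bool)) := Cardinal.eq.mp (by simp [hι])
  have hx : ∀ β, ∃ x ∈ X, ∀ p ∈ D ∩ e '' Iic β, cAdd x (z β) ∉ body p := fun β =>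
    exists_mem_cAdd_notMem_body hperf hinv hcov inter_subset_left
      ((mk_le_mk_of_subset inter_subset_right).trans_lt (mk_image_le.trans_lt (hsmall β))) (z β)
  choose x hxX hxz using hx
  set Y := range fun β => cAdd (x β) (z β)
  have hY : MarczewskiNull Y :=
    marczewskiNull_range hperf hdense e hsmall _ fun α β hαβ hα => hxz β _ ⟨hα, α, hαβ, rfl⟩
  have hXY : setAdd X Y = Set.univ := eq_univ_of_forall fun c =>
    ⟨x (z.symm c), hxX _, _, ⟨z.symm c, rfl⟩, by funext n; simp [cAdd]⟩
  exact ⟨⟨Y, hY, hXY⟩, fun h => h Y hY hXY⟩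
end

section
/- Every subset X of 2^ω of cardinality continuum contains a subset X' of cardinality continuum which is Marczewski null. Consequently there are no 'generalized Luzin sets' for the Marczewski ideal s₀. -/
open Cardinal

/-!
If every nonempty perfect set has a nonempty perfect subset meeting `X` in fewer than `𝔠`
points, then `X` itself is Marczewski null: a perfect set splits into `𝔠` pairwise disjoint
perfect sets, and a set of size `< 𝔠` misses one of them.

Otherwise some perfect `P` satisfies `|Q ∩ X| = 𝔠` for every perfect `Q ⊆ P`. Split `P` into
disjoint perfect sets `F i`, `i < 𝔠`, enumerate the closed sets as `e j`, `j < 𝔠`, and pick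
`x i ∈ X ∩ F i` outside the sets `e j ∩ F i` with `j ≤ i` that are countable; fewer than `𝔠`
points are excluded. A perfect `Q` meeting some `F i` uncountably contains a perfect subset of
`Q ∩ F i`, which meets `{x i | i}` in at most one point; otherwise `Q = e j` contains only the
points `x i` with `i < j`. Either way the criterion above makes `{x i | i}` Marczewski null.
-/

open Set Function

universe u

theorem mk_iUnion_lt_continuum {α ι : Type u} {f : ι → Set α} (hι : #ι < 𝔠)
    (hf : ∀ i, (f i).Countable) : #(⋃ i, f i) < 𝔠 :=
  (mk_iUnion_le f).trans_lt <| mul_lt_of_lt aleph0_le_continuum hι <|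
    (ciSup_le' fun i => (hf i).le_aleph0).trans_lt aleph0_lt_continuum

theorem mk_Iic_toType_ord_lt {c : Cardinal} (hc : ℵ₀ ≤ c) (i : c.ord.ToType) :
    #(Iic i) < c := by
  rw [← Iio_insert]
  exact mk_insert_le.trans_lt
    (add_lt_of_lt hc (by simpa using mk_Iio_lt i) (one_lt_aleph0.trans_le hc))

theorem mk_cantor : #Cantor = 𝔠 := by simp

section

variable {α : Type u} [TopologicalSpace α]

def IsMarczewskiNull (Y : Set α) : Prop :=
  ∀ P, Perfect P → P.Nonempty → ∃ Q ⊆ P, Perfect Q ∧ Q.Nonempty ∧ Disjoint Q Y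

theorem mk_setOf_isClosed_le_continuum [SecondCountableTopology α] :
    #{C : Set α | IsClosed C} ≤ 𝔠 := by
  obtain ⟨b, hbc, -, hb⟩ := TopologicalSpace.exists_countable_basis α
  borelize α
  refine (mk_le_mk_of_subset fun C hC => ?_).trans
    (MeasurableSpace.cardinal_measurableSet_le_continuum (hbc.le_aleph0.trans aleph0_le_continuum))
  show @MeasurableSet α (.generateFrom b) C
  rw [← borel_eq_generateFrom_of_subbasis hb.eq_generateFrom]
  exact hC.measurableSet

theorem exists_setOf_isClosed_subset_range [SecondCountableTopology α] {ι : Type u}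
    (hι : 𝔠 ≤ #ι) : ∃ e : ι → Set α, {C | IsClosed C} ⊆ range e := by
  obtain ⟨g⟩ : Nonempty ({C : Set α | IsClosed C} ↪ ι) :=
    (le_def _ _).1 (mk_setOf_isClosed_le_continuum.trans hι)
  have : Nonempty {C : Set α | IsClosed C} := ⟨⟨∅, isClosed_empty⟩⟩
  exact ⟨fun j => (invFun g j).1, fun C hC =>
    ⟨g ⟨C, hC⟩, congrArg Subtype.val (leftInverse_invFun g.injective _)⟩⟩

variable [PolishSpace α]

theorem Perfect.exists_continuous_injective_prod_cantor {P : Set α} (hP : Perfect P)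
    (hne : P.Nonempty) : ∃ f : Cantor × Cantor → α, range f ⊆ P ∧ Continuous f ∧ Injective f := by
  let := TopologicalSpace.upgradeIsCompletelyMetrizable α
  obtain ⟨f, hfP, hfc, hfi⟩ := hP.exists_nat_bool_injection hne
  let h : Cantor × Cantor ≃ₜ (ℕ → Bool) :=
    Homeomorph.sumArrowHomeomorphProdArrow.symm.trans
      (.piCongrLeft (Y := fun _ => Bool) Equiv.natSumNatEquivNat)
  exact ⟨f ∘ h, (range_comp_subset_range _ _).trans hfP, hfc.comp h.continuous,
    hfi.comp h.injective⟩

theorem Perfect.exists_pairwise_disjoint_perfect {ι : Type*} (hι : #ι ≤ 𝔠) {P : Set α}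
    (hP : Perfect P) (hne : P.Nonempty) :
    ∃ F : ι → Set α,
      (∀ i, Perfect (F i) ∧ (F i).Nonempty ∧ F i ⊆ P) ∧ Pairwise (Disjoint on F) := by
  obtain ⟨f, hfP, hfc, hfi⟩ := hP.exists_continuous_injective_prod_cantor hne
  obtain ⟨e⟩ : Nonempty (ι ↪ Cantor) := lift_mk_le'.1 (by simpa using hι)
  have hslice (t : Cantor) :
      ∃ D, Perfect D ∧ D.Nonempty ∧ D ⊆ range fun s => f (s, t) := by
    refine exists_perfect_nonempty_of_isClosed_of_not_countable
      (isCompact_range (by fun_prop)).isClosed fun hc => ?_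
    have := hc.preimage (f := fun s => f (s, t)) (hfi.comp (Prod.mk_left_injective t))
    rw [preimage_range, countable_univ_iff, ← mk_le_aleph0_iff, mk_cantor] at this
    exact this.not_gt aleph0_lt_continuum
  choose D hD using hslice
  refine ⟨fun i => D (e i), fun i => ⟨(hD _).1, (hD _).2.1, (hD _).2.2.trans
    ((range_comp_subset_range _ _).trans hfP)⟩, fun i j hij => ?_⟩
  refine Disjoint.mono (hD _).2.2 (hD _).2.2 (disjoint_range_iff.2 fun s s' hss' => hij ?_)
  exact e.injective (congrArg Prod.snd (hfi hss'))

theorem Perfect.exists_perfect_subset_disjoint_of_mk_lt {P S : Set α} (hP : Perfect P)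
    (hne : P.Nonempty) (hS : #S < 𝔠) :
    ∃ Q ⊆ P, Perfect Q ∧ Q.Nonempty ∧ Disjoint Q S := by
  obtain ⟨F, hF, hFd⟩ :=
    hP.exists_pairwise_disjoint_perfect (ι := ULift.{u} Cantor) (by simp) hne
  by_contra! h
  have hmeet (t) : ∃ s : S, (s : α) ∈ F t := by
    obtain ⟨s, hsF, hsS⟩ := not_disjoint_iff.1 (h _ (hF t).2.2 (hF t).1 (hF t).2.1)
    exact ⟨⟨s, hsS⟩, hsF⟩
  choose g hg using hmeet
  have hg_inj : Injective g := fun t t' htt' => by_contra fun hne =>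
    (hFd hne).ne_of_mem (hg t) (hg t') (congrArg Subtype.val htt')
  exact (mk_le_of_injective hg_inj).not_gt (by simpa using hS)

theorem isMarczewskiNull_of_forall_exists_mk_inter_lt {Y : Set α}
    (h : ∀ P, Perfect P → P.Nonempty →
      ∃ Q ⊆ P, Perfect Q ∧ Q.Nonempty ∧ #(Q ∩ Y : Set α) < 𝔠) :
    IsMarczewskiNull Y := by
  intro P hP hne
  obtain ⟨Q, hQP, hQ, hQne, hQY⟩ := h P hP hne
  obtain ⟨R, hRQ, hR, hRne, hRY⟩ := hQ.exists_perfect_subset_disjoint_of_mk_lt hQne hQY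
  exact ⟨R, hRQ.trans hQP, hR, hRne,
    disjoint_left.2 fun x hxR hxY => disjoint_left.1 hRY hxR ⟨hRQ hxR, hxY⟩⟩

theorem exists_isMarczewskiNull_subset_of_forall_continuum_le {ι : Type u} [LinearOrder ι]
    (hι : #ι = 𝔠) (hIic : ∀ i : ι, #(Iic i) < 𝔠) {X P : Set α} (hP : Perfect P)
    (hne : P.Nonempty) (hX : ∀ Q ⊆ P, Perfect Q → Q.Nonempty → 𝔠 ≤ #(Q ∩ X : Set α)) :
    ∃ X' ⊆ X, #X' = 𝔠 ∧ IsMarczewskiNull X' := by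
  obtain ⟨F, hF, hFd⟩ := hP.exists_pairwise_disjoint_perfect hι.le hne
  obtain ⟨e, he⟩ := exists_setOf_isClosed_subset_range (α := α) hι.ge
  let A (i : ι) : Set α := ⋃ j : {j // j ≤ i ∧ (e j ∩ F i).Countable}, e j ∩ F i
  have hx (i : ι) : ∃ x ∈ F i ∩ X, x ∉ A i := by
    by_contra! h
    refine ((hX _ (hF i).2.2 (hF i).1 (hF i).2.1).trans (mk_le_mk_of_subset h)).not_gt ?_
    exact mk_iUnion_lt_continuum ((mk_subtype_mono fun j hj => hj.1).trans_lt (hIic i))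
      fun j => j.2.2
  choose x hxFX hxA using hx
  have hx_eq {i j : ι} (h : x i ∈ F j) : i = j :=
    by_contra fun hij => (hFd hij).ne_of_mem (hxFX i).1 h rfl
  refine ⟨range x, range_subset_iff.2 fun i => (hxFX i).2, ?_,
    isMarczewskiNull_of_forall_exists_mk_inter_lt fun Q hQ hQne => ?_⟩
  · rw [mk_range_eq x fun i j hij => hx_eq (hij ▸ (hxFX j).1)]
    exact hι
  by_cases hc : ∀ i, (Q ∩ F i).Countable
  · obtain ⟨j, rfl⟩ := he hQ.closed
    refine ⟨e j, subset_rfl, hQ, hQne, (mk_le_mk_of_subset (t := x '' Iio j) ?_).trans_lt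
      (mk_image_le.trans_lt ((mk_le_mk_of_subset Iio_subset_Iic_self).trans_lt (hIic j)))⟩
    rintro _ ⟨hxj, i, rfl⟩
    exact ⟨i, not_le.1 fun hji => hxA i (mem_iUnion.2 ⟨⟨j, hji, hc i⟩, hxj, (hxFX i).1⟩), rfl⟩
  · push Not at hc
    obtain ⟨i, hi⟩ := hc
    obtain ⟨D, hD, hDne, hDQ⟩ :=
      exists_perfect_nonempty_of_isClosed_of_not_countable (hQ.closed.inter (hF i).1.closed) hi
    refine ⟨D, hDQ.trans inter_subset_left, hD, hDne,
      (mk_le_mk_of_subset (t := {x i}) ?_).trans_lt ?_⟩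
    · rintro _ ⟨hxD, k, rfl⟩
      rw [hx_eq (hDQ hxD).2]
      rfl
    · simpa using one_lt_aleph0.trans aleph0_lt_continuum

theorem exists_subset_mk_eq_continuum_isMarczewskiNull {X : Set α} (hX : #X = 𝔠) :
    ∃ X' ⊆ X, #X' = 𝔠 ∧ IsMarczewskiNull X' := by
  by_cases h : ∀ P, Perfect P → P.Nonempty →
      ∃ Q ⊆ P, Perfect Q ∧ Q.Nonempty ∧ #(Q ∩ X : Set α) < 𝔠
  · exact ⟨X, subset_rfl, hX, isMarczewskiNull_of_forall_exists_mk_inter_lt h⟩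
  push Not at h
  obtain ⟨P, hP, hne, hPX⟩ := h
  exact exists_isMarczewskiNull_subset_of_forall_continuum_le (mk_ord_toType _)
    (mk_Iic_toType_ord_lt aleph0_le_continuum) hP hne hPX

end

theorem IsMarczewskiNull.marczewskiNull {Y : Set Cantor} (hY : IsMarczewskiNull Y) :
    MarczewskiNull Y := fun P ⟨hP, hne⟩ =>
  let ⟨Q, hQP, hQ, hQne, hQY⟩ := hY P hP hne
  ⟨Q, ⟨hQ, hQne⟩, hQP, hQY.inter_eq⟩

instance : PolishSpace Cantor := {}

theorem stmt8 (X : Set Cantor) (hX : #X = Cardinal.continuum) :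
    ∃ X' ⊆ X, #X' = Cardinal.continuum ∧ MarczewskiNull X' := by
  obtain ⟨X', hX'X, hX', hX'null⟩ := exists_subset_mk_eq_continuum_isMarczewskiNull hX
  exact ⟨X', hX'X, hX', hX'null.marczewskiNull⟩
end

section
/- Let G be a Polish group and P ⊆ G a perfect set. Then there is a perfect set Q ⊆ P such that Q is skew. -/
/-!
We build a Cantor scheme of closed balls centred in `P`, refining a whole level at a time.
For finitely many indices, a generic choice of centres in `P` (Baire category in `P^ι`) avoids
every relation `c s - c t = c u - c v` with `s ≠ t` and `{s, t} ≠ {u, v}`: one of `s`, `t`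
occurs only once in it, so with the other coordinates fixed it has at most one solution, while
`P` has no isolated points. Skewness of finitely many points is an open condition, so small
enough balls around generic centres are still skew, and the branches of the scheme converge to
the points of a perfect skew set.
-/

def SkewSet {G : Type*} [AddGroup G] (Z : Set G) : Prop :=
  ∀ x ∈ Z, ∀ y ∈ Z, ∀ v ∈ Z, ∀ w ∈ Z,
    x ≠ y → v ≠ w → ({x, y} : Set G) ≠ ({v, w} : Set G) → x - y ≠ v - w

open Function Set Filter Topology Metric PiNat CantorScheme

section Skew

variable {G ι : Type*} [AddGroup G]

def IsSkewFamily (A : ι → Set G) : Prop :=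
  Pairwise (Disjoint on A) ∧ ∀ ⦃s t u v : ι⦄, s ≠ t → u ≠ v → ({s, t} : Set ι) ≠ {u, v} →
    ∀ x ∈ A s, ∀ y ∈ A t, ∀ z ∈ A u, ∀ w ∈ A v, x - y ≠ z - w

theorem IsSkewFamily.mono {A B : ι → Set G} (hA : IsSkewFamily A) (hBA : ∀ i, B i ⊆ A i) :
    IsSkewFamily B :=
  ⟨fun _ _ hij => (hA.1 hij).mono (hBA _) (hBA _),
    fun _ _ _ _ hst huv hne x hx y hy z hz w hw =>
      hA.2 hst huv hne x (hBA _ hx) y (hBA _ hy) z (hBA _ hz) w (hBA _ hw)⟩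

theorem notMem_or_notMem_of_pair_ne {s t u v : ι} (hst : s ≠ t)
    (hne : ({s, t} : Set ι) ≠ {u, v}) : s ∉ ({t, u, v} : Set ι) ∨ t ∉ ({s, u, v} : Set ι) := by
  by_contra! h
  simp only [mem_insert_iff, mem_singleton_iff] at h
  apply hne
  rcases h with ⟨hs | hs | hs, ht | ht | ht⟩ <;> subst_vars <;>
    first | exact absurd rfl hst | simp [pair_comm]

end Skew

theorem dense_setOf_ne_of_injective_update {ι Y Z : Type*} [TopologicalSpace Y] [PerfectSpace Y]
    [DecidableEq ι] {f g : (ι → Y) → Z} (j : ι) (hf : ∀ c, Injective fun y => f (update c j y))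
    (hg : ∀ c y, g (update c j y) = g c) : Dense {c | f c ≠ g c} := by
  rw [dense_iff_inter_open]
  rintro W hW ⟨c, hc⟩
  have hV : {y | update c j y ∈ W} ∈ 𝓝 (c j) :=
    (continuous_const.update j continuous_id).continuousAt.preimage_mem_nhds
      (by rw [id, update_eq_self]; exact hW.mem_nhds hc)
  obtain ⟨y, ⟨hyW, -⟩, hyc⟩ :=
    preperfect_iff_nhds.1 PerfectSpace.univ_preperfect (c j) (mem_univ _) _ hV
  by_cases h : f c = g c
  · refine ⟨update c j y, hyW, fun h' => hyc (hf c ?_)⟩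
    simp only [update_eq_self, h', hg, h]
  · exact ⟨c, hc, h⟩

theorem Preperfect.perfectSpace_coe {X : Type*} [TopologicalSpace X] {P : Set X}
    (hP : Preperfect P) : PerfectSpace P := by
  refine ⟨preperfect_iff_nhds.2 fun x _ U hU => ?_⟩
  obtain ⟨V, hV, hVU⟩ := (mem_nhds_subtype _ _ _).1 hU
  obtain ⟨y, ⟨hyV, hyP⟩, hyx⟩ := preperfect_iff_nhds.1 hP x x.2 V hV
  exact ⟨⟨y, hyP⟩, ⟨hVU hyV, mem_univ _⟩, fun h => hyx (congrArg Subtype.val h)⟩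

theorem dense_setOf_sub_ne {G ι : Type*} [AddGroup G] [TopologicalSpace G] {P : Set G}
    [PerfectSpace P] {s t u v : ι} (h : s ∉ ({t, u, v} : Set ι) ∨ t ∉ ({s, u, v} : Set ι)) :
    Dense {c : ι → P | (c s : G) - c t ≠ c u - c v} := by
  classical
  simp only [mem_insert_iff, mem_singleton_iff, not_or] at h
  rcases h with ⟨hst, hsu, hsv⟩ | ⟨hts, htu, htv⟩
  · refine dense_setOf_ne_of_injective_update s (fun c y y' hyy' => Subtype.ext ?_)
      fun c y => by simp [update_of_ne (Ne.symm hsu), update_of_ne (Ne.symm hsv)]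
    simpa [update_of_ne (Ne.symm hst)] using hyy'
  · refine dense_setOf_ne_of_injective_update t (fun c y y' hyy' => Subtype.ext ?_)
      fun c y => by simp [update_of_ne (Ne.symm htu), update_of_ne (Ne.symm htv)]
    simpa [update_of_ne (Ne.symm hts)] using hyy'

section Metric

variable {G ι : Type*} [AddGroup G] [MetricSpace G] [ContinuousSub G]

theorem Perfect.exists_isSkewFamily_singleton [CompleteSpace G] [Finite ι] {P : Set G}
    (hP : Perfect P) {U : ι → Set G} (hU : ∀ i, IsOpen (U i)) (hUP : ∀ i, (U i ∩ P).Nonempty) :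
    ∃ c : ι → G, (∀ i, c i ∈ U i ∩ P) ∧ IsSkewFamily fun i => ({c i} : Set G) := by
  have := hP.acc.perfectSpace_coe
  have := hP.closed.completeSpace_coe
  let S := {q : ι × ι × ι × ι |
    q.1 ∉ ({q.2.1, q.2.2.1, q.2.2.2} : Set ι) ∨ q.2.1 ∉ ({q.1, q.2.2.1, q.2.2.2} : Set ι)}
  have hgood : Dense (⋂ q ∈ S, {c : ι → P | (c q.1 : G) - c q.2.1 ≠ c q.2.2.1 - c q.2.2.2}) :=
    dense_biInter_of_isOpen (fun q _ => isOpen_ne_fun (by fun_prop) (by fun_prop)) S.to_countable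
      fun q hq => dense_setOf_sub_ne hq
  choose p hpU hpP using hUP
  obtain ⟨c, hcU, hc⟩ := hgood.inter_open_nonempty {c : ι → P | ∀ i, (c i : G) ∈ U i}
    (by rw [ofPred_forall]; exact isOpen_iInter_of_finite fun i => (hU i).preimage (by fun_prop))
    ⟨fun i => ⟨p i, hpP i⟩, hpU⟩
  simp only [mem_iInter, mem_ofPred_eq] at hc hcU
  refine ⟨fun i => c i, fun i => ⟨hcU i, (c i).2⟩, fun i j hij => ?_, ?_⟩
  · -- `c i ≠ c j` is the avoided relation indexed by `(i, j, j, j)`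
    have : (c i : G) - c j ≠ c j - c j := hc (i, j, j, j) (Or.inl (by simpa using hij))
    rw [sub_self, sub_ne_zero] at this
    exact disjoint_singleton.2 this
  · rintro s t u v hst - hne _ rfl _ rfl _ rfl _ rfl
    exact hc (s, t, u, v) (notMem_or_notMem_of_pair_ne hst hne)

theorem IsSkewFamily.eventually_closedBall [Finite ι] {c : ι → G}
    (hc : IsSkewFamily fun i => ({c i} : Set G)) :
    ∀ᶠ ε in 𝓝 (0 : ℝ), IsSkewFamily fun i => closedBall (c i) ε := by
  obtain ⟨hdisj, hskew⟩ := hc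
  refine .and ?_ ?_
  · simp only [Pairwise, eventually_all]
    intro i j hij
    have : {p : G × G | p.1 ≠ p.2} ∈ 𝓝 (c i, c j) :=
      (isOpen_ne_fun continuous_fst continuous_snd).mem_nhds (disjoint_singleton.1 (hdisj hij))
    filter_upwards [eventually_closedBall_subset this] with ε hε
    rw [← closedBall_prod_same] at hε
    exact disjoint_left.2 fun x hxi hxj => hε (a := (x, x)) ⟨hxi, hxj⟩ rfl
  · simp only [eventually_all]
    intro s t u v hst huv hne
    have : {q : G × G × G × G | q.1 - q.2.1 ≠ q.2.2.1 - q.2.2.2} ∈ 𝓝 (c s, c t, c u, c v) :=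
      (isOpen_ne_fun (by fun_prop) (by fun_prop)).mem_nhds
        (hskew hst huv hne _ rfl _ rfl _ rfl _ rfl)
    filter_upwards [eventually_closedBall_subset this] with ε hε x hx y hy z hz w hw
    rw [← closedBall_prod_same, ← closedBall_prod_same, ← closedBall_prod_same] at hε
    exact hε (a := (x, y, z, w)) ⟨hx, hy, hz, hw⟩

theorem Perfect.exists_isSkewFamily_closedBall [CompleteSpace G] [Finite ι] {P : Set G}
    (hP : Perfect P) {U : ι → Set G} (hU : ∀ i, IsOpen (U i)) (hUP : ∀ i, (U i ∩ P).Nonempty)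
    {δ : ℝ} (hδ : 0 < δ) :
    ∃ c : ι → G, (∀ i, c i ∈ U i ∩ P) ∧
      ∃ ε, 0 < ε ∧ ε ≤ δ ∧ IsSkewFamily fun i => closedBall (c i) ε := by
  obtain ⟨c, hcU, hc⟩ := hP.exists_isSkewFamily_singleton hU hUP
  obtain ⟨ε, ⟨hskew, hεδ⟩, hε⟩ :=
    (((hc.eventually_closedBall.and (eventually_le_nhds hδ)).filter_mono nhdsWithin_le_nhds).and
      self_mem_nhdsWithin).exists (f := 𝓝[>] 0)
  exact ⟨c, hcU, ε, hε, hεδ, hskew⟩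

end Metric

section Scheme

variable {G : Type*} [AddGroup G] [MetricSpace G]

/-- Level `n` of the Cantor scheme: balls indexed by the binary words of length `n`. -/
structure SkewLevel (P : Set G) (n : ℕ) where
  center : List.Vector Bool n → G
  radius : ℝ
  center_mem : ∀ v, center v ∈ P
  radius_pos : 0 < radius
  radius_le : radius ≤ 2⁻¹ ^ n
  isSkewFamily : IsSkewFamily fun v => closedBall (center v) radius

variable [ContinuousSub G] [CompleteSpace G] {P : Set G}

theorem Perfect.nonempty_skewLevel_zero (hP : Perfect P) (hPne : P.Nonempty) :
    Nonempty (SkewLevel P 0) := by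
  obtain ⟨c, hc, ε, hε, hε1, hskew⟩ :=
    hP.exists_isSkewFamily_closedBall (ι := List.Vector Bool 0) (fun _ => isOpen_univ)
      (fun _ => by simpa using hPne) one_pos
  exact ⟨⟨c, ε, fun v => (hc v).2, hε, by simpa using hε1, hskew⟩⟩

theorem Perfect.exists_skewLevel_succ (hP : Perfect P) {n : ℕ} (L : SkewLevel P n) :
    ∃ L' : SkewLevel P (n + 1),
      ∀ v, closedBall (L'.center v) L'.radius ⊆ closedBall (L.center v.tail) L.radius := by
  have hr := L.radius_pos
  obtain ⟨c, hc, ε, hε, hεr, hskew⟩ := hP.exists_isSkewFamily_closedBall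
    (U := fun v : List.Vector Bool (n + 1) => ball (L.center v.tail) (L.radius / 2))
    (fun _ => isOpen_ball)
    (fun v => ⟨_, mem_ball_self (half_pos hr), L.center_mem _⟩) (half_pos hr)
  refine ⟨⟨c, ε, fun v => (hc v).2, hε, ?_, hskew⟩, fun v => closedBall_subset_closedBall' ?_⟩
  · calc ε ≤ L.radius / 2 := hεr
      _ ≤ 2⁻¹ ^ n / 2 := by gcongr; exact L.radius_le
      _ = 2⁻¹ ^ (n + 1) := by ring
  · linarith [mem_ball.1 (hc v).1, hεr]

theorem Perfect.exists_skew_cantorScheme (hP : Perfect P) (hPne : P.Nonempty) :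
    ∃ A : List Bool → Set G, ClosureAntitone A ∧ VanishingDiam A ∧ (∀ l, (A l).Nonempty) ∧
      (∀ l, A l ⊆ P) ∧ ∀ n, IsSkewFamily fun v : List.Vector Bool n => A v.toList := by
  obtain ⟨L₀⟩ := hP.nonempty_skewLevel_zero hPne
  choose next hnext using fun n (L : SkewLevel P n) => hP.exists_skewLevel_succ L
  let L : ∀ n, SkewLevel P n := fun n => Nat.rec L₀ next n
  let A : List Bool → Set G := fun l =>
    closedBall ((L l.length).center ⟨l, rfl⟩) (L l.length).radius ∩ P
  have hA : ∀ n (v : List.Vector Bool n),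
      A v.toList = closedBall ((L n).center v) (L n).radius ∩ P := by
    rintro n ⟨l, rfl⟩
    rfl
  refine ⟨A, ?_, fun σ => ?_, fun l => ?_, fun l => inter_subset_right,
    fun n => (L n).isSkewFamily.mono fun v => (hA n v).trans_subset inter_subset_left⟩
  · exact CantorScheme.Antitone.closureAntitone
      (fun l a => inter_subset_inter_left _ (hnext _ (L l.length) ⟨a :: l, rfl⟩))
      fun l => isClosed_closedBall.inter hP.closed
  · have hdiam : ∀ n, ediam (A (res σ n)) ≤ ENNReal.ofReal (2 * 2⁻¹ ^ n) := fun n => by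
      have := hA n ⟨res σ n, res_length σ n⟩
      rw [List.Vector.toList_mk] at this
      rw [this]
      refine ediam_le_of_forall_dist_le fun x hx y hy => ?_
      linarith [dist_triangle_right x y ((L n).center ⟨res σ n, res_length σ n⟩),
        mem_closedBall.1 hx.1, mem_closedBall.1 hy.1, (L n).radius_le]
    have hlim : Tendsto (fun n : ℕ => ENNReal.ofReal (2 * 2⁻¹ ^ n)) atTop (𝓝 0) := by
      have := tendsto_pow_atTop_nhds_zero_of_lt_one (r := (2⁻¹ : ℝ)) (by norm_num) (by norm_num)
      simpa using ENNReal.tendsto_ofReal (this.const_mul 2)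
    exact tendsto_of_tendsto_of_tendsto_of_le_of_le tendsto_const_nhds hlim (fun _ => zero_le)
      hdiam
  · exact ⟨_, mem_closedBall_self (L _).radius_pos.le, (L _).center_mem _⟩

end Scheme

instance : PerfectSpace (ℕ → Bool) := by
  refine ⟨fun σ _ => accPt_iff_frequently.2 ?_⟩
  have hflip : Tendsto (fun n => update σ n (!σ n)) atTop (𝓝 σ) :=
    tendsto_pi_nhds.2 fun i => tendsto_const_nhds.congr' <|
      (eventually_gt_atTop i).mono fun n hn => (update_of_ne hn.ne _ _).symm
  refine hflip.frequently (Frequently.of_forall fun n => ⟨fun h => ?_, mem_univ _⟩)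
  simpa using congrFun h n

theorem perfect_range_of_injective {X Y : Type*} [TopologicalSpace X] [CompactSpace X]
    [PerfectSpace X] [TopologicalSpace Y] [T2Space Y] {f : X → Y} (hf : Continuous f)
    (hinj : Injective f) : Perfect (range f) := by
  refine ⟨(isCompact_range hf).isClosed, ?_⟩
  rintro _ ⟨x, rfl⟩
  refine accPt_iff_nhds.2 fun U hU => ?_
  obtain ⟨y, ⟨hyU, -⟩, hyx⟩ :=
    accPt_iff_nhds.1 (PerfectSpace.univ_preperfect x (mem_univ x)) _ (hf.continuousAt hU)
  exact ⟨f y, ⟨hyU, mem_range_self y⟩, hinj.ne hyx⟩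

theorem PiNat.eventually_injOn_res {β : Type*} {S : Set (ℕ → β)} (hS : S.Finite) :
    ∀ᶠ n in atTop, S.InjOn fun σ => res σ n := by
  have key : ∀ σ τ : ℕ → β, ∀ᶠ n in atTop, res σ n = res τ n → σ = τ := by
    intro σ τ
    by_cases h : σ = τ
    · exact .of_forall fun _ _ => h
    obtain ⟨m, hm⟩ := ne_iff.1 h
    filter_upwards [eventually_gt_atTop m] with n hn hres using absurd (res_eq_res.1 hres hn) hm
  filter_upwards [(eventually_all_finite hS).2 fun σ _ => (eventually_all_finite hS).2
    fun τ _ => key σ τ] with n hn σ hσ τ hτ using hn σ hσ τ hτ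

theorem CantorScheme.disjoint_of_isSkewFamily {α : Type*} [AddGroup α] {A : List Bool → Set α}
    (hA : ∀ n, IsSkewFamily fun v : List.Vector Bool n => A v.toList) : CantorScheme.Disjoint A :=
  fun l a b hab => (hA (l.length + 1)).1 (i := ⟨a :: l, rfl⟩) (j := ⟨b :: l, rfl⟩)
    fun h => hab (List.cons_eq_cons.1 (congrArg Subtype.val h)).1

theorem skewSet_range_of_forall_mem_res {α : Type*} [AddGroup α] {A : List Bool → Set α}
    (hA : ∀ n, IsSkewFamily fun v : List.Vector Bool n => A v.toList) {Φ : (ℕ → Bool) → α}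
    (hΦ : ∀ σ n, Φ σ ∈ A (res σ n)) : SkewSet (range Φ) := by
  rintro _ ⟨σ₁, rfl⟩ _ ⟨σ₂, rfl⟩ _ ⟨σ₃, rfl⟩ _ ⟨σ₄, rfl⟩ h₁₂ h₃₄ hne
  let S : Set (ℕ → Bool) := {σ₁, σ₂, σ₃, σ₄}
  obtain ⟨n, hn⟩ := (eventually_injOn_res (S := S) (toFinite S)).exists
  let r : (ℕ → Bool) → List.Vector Bool n := fun σ => ⟨res σ n, res_length σ n⟩
  have hr : S.InjOn r := fun σ hσ τ hτ h => hn hσ hτ (congrArg Subtype.val h)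
  refine (hA n).2 (hr.ne (by simp [S]) (by simp [S]) (ne_of_apply_ne Φ h₁₂))
    (hr.ne (by simp [S]) (by simp [S]) (ne_of_apply_ne Φ h₃₄)) (fun h => hne ?_)
    _ (hΦ σ₁ n) _ (hΦ σ₂ n) _ (hΦ σ₃ n) _ (hΦ σ₄ n)
  rw [← image_pair, ← image_pair] at h ⊢
  rw [(hr.image_eq_image_iff (by simp [S, pair_subset_iff]) (by simp [S, pair_subset_iff])).1 h]

theorem stmt17 {G : Type*} [AddGroup G] [TopologicalSpace G] [IsTopologicalAddGroup G]
    [PolishSpace G] (P : Set G) (hP : Perfect P) (hPne : P.Nonempty) :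
    ∃ Q ⊆ P, Perfect Q ∧ Q.Nonempty ∧ SkewSet Q := by
  let := TopologicalSpace.upgradeIsCompletelyMetrizable G
  obtain ⟨A, hanti, hdiam, hne, hAP, hskew⟩ := hP.exists_skew_cantorScheme hPne
  have hdom : ∀ σ, σ ∈ (inducedMap A).1 := by simp [hanti.map_of_vanishingDiam hdiam hne]
  let Φ : (ℕ → Bool) → G := fun σ => (inducedMap A).2 ⟨σ, hdom σ⟩
  have hΦ : ∀ σ n, Φ σ ∈ A (res σ n) := fun σ => map_mem ⟨σ, hdom σ⟩
  have hΦc : Continuous Φ := hdiam.map_continuous.comp (by fun_prop)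
  have hΦi : Injective Φ := fun σ τ h =>
    congrArg Subtype.val ((disjoint_of_isSkewFamily hskew).map_injective h)
  exact ⟨range Φ, range_subset_iff.2 fun σ => hAP [] (hΦ σ 0),
    perfect_range_of_injective hΦc hΦi, range_nonempty Φ, skewSet_range_of_forall_mem_res hskew hΦ⟩
end
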